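/- The six elements ĉ0, ĉ1, ĉ2, d̂0, d̂2, d̂3 of the ring R are algebraically independent over ℂ (note that d̂1 = 0 by construction). -/

import Mathlib

open MvPolynomial Complex

/-- The ring `R`: we realize the localization of `ℂ[α0,α1,α2,β0,β1,β2,β3]` at `α0, β0`
inside the fraction field, where `α0` and `β0` are invertible. -/
noncomputable abbrev Frac : Type := FractionRing (MvPolynomial (Fin 7) ℂ)

/-- `α0, α1, α2` (coefficients of the binary quadratic) -/
noncomputable def alph : ℕ → Frac
  | 0 => algebraMap (MvPolynomial (Fin 7) ℂ) Frac (X 0)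
  | 1 => algebraMap (MvPolynomial (Fin 7) ℂ) Frac (X 1)
  | 2 => algebraMap (MvPolynomial (Fin 7) ℂ) Frac (X 2)
  | _ => 0

/-- `β0, β1, β2, β3` (coefficients of the binary cubic) -/
noncomputable def bet : ℕ → Frac
  | 0 => algebraMap (MvPolynomial (Fin 7) ℂ) Frac (X 3)
  | 1 => algebraMap (MvPolynomial (Fin 7) ℂ) Frac (X 4)
  | 2 => algebraMap (MvPolynomial (Fin 7) ℂ) Frac (X 5)
  | 3 => algebraMap (MvPolynomial (Fin 7) ℂ) Frac (X 6)
  | _ => 0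

/-- `â_i = Σ_{j=0}^{i} α_j · C(2−j, 2−i) · (−α1/(2α0))^{i−j}` -/
noncomputable def ahat (i : ℕ) : Frac :=
  ∑ j ∈ Finset.range (i + 1),
    alph j * (Nat.choose (2 - j) (2 - i) : Frac) * (-alph 1 / (2 * alph 0)) ^ (i - j)

/-- `b̂_i = Σ_{j=0}^{i} β_j · C(3−j, 3−i) · (−α1/(2α0))^{i−j}` -/
noncomputable def bhat (i : ℕ) : Frac :=
  ∑ j ∈ Finset.range (i + 1),
    bet j * (Nat.choose (3 - j) (3 - i) : Frac) * (-alph 1 / (2 * alph 0)) ^ (i - j)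

/-- `ĉ_i = Σ_{j=0}^{i} α_j · C(2−j, 2−i) · (−β1/(3β0))^{i−j}` -/
noncomputable def chat (i : ℕ) : Frac :=
  ∑ j ∈ Finset.range (i + 1),
    alph j * (Nat.choose (2 - j) (2 - i) : Frac) * (-bet 1 / (3 * bet 0)) ^ (i - j)

/-- `d̂_i = Σ_{j=0}^{i} β_j · C(3−j, 3−i) · (−β1/(3β0))^{i−j}` -/
noncomputable def dhat (i : ℕ) : Frac :=
  ∑ j ∈ Finset.range (i + 1),
    bet j * (Nat.choose (3 - j) (3 - i) : Frac) * (-bet 1 / (3 * bet 0)) ^ (i - j)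

/-! With `t = -β₁/(3β₀)`, the elements `ĉᵢ` and `d̂ᵢ` are the coefficients of the quadratic and
cubic forms after the substitution `x ↦ x + t y`, and `d̂₁ = 0`. Shifting back by `-t`, with `0` in
place of `β₁` in the cubic, defines an endomorphism of `ℂ[α, β][β₀⁻¹]` that fixes `β₀` and `β₁`,
hence `t`; since the shifts by `t` and `-t` cancel, it maps `ĉ₀, ĉ₁, ĉ₂, d̂₀, β₁, d̂₂, d̂₃` to the
seven variables. So these seven elements are algebraically independent. -/

section TaylorShift

variable {A : Type*} [CommRing A]

/-- The coefficient of `x ^ (n - i) * y ^ i` in `f (x + s * y, y)`, where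
`f = ∑ⱼ a j * x ^ (n - j) * y ^ j`. -/
def taylorShift (n : ℕ) (s : A) (a : ℕ → A) (i : ℕ) : A :=
  ∑ j ∈ Finset.range (i + 1), a j * (Nat.choose (n - j) (n - i) : A) * s ^ (i - j)

/-- The binary form `∑ⱼ a j * x ^ (n - j) * y ^ j`, dehomogenised at `y = 1`. -/
noncomputable def binaryForm (n : ℕ) (a : ℕ → A) : Polynomial A :=
  ∑ j ∈ Finset.range (n + 1), Polynomial.C (a j) * Polynomial.X ^ (n - j)

theorem coeff_binaryForm {n k : ℕ} (a : ℕ → A) (hk : k ≤ n) :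
    (binaryForm n a).coeff k = a (n - k) := by
  simp only [binaryForm, Polynomial.finsetSum_coeff, Polynomial.coeff_C_mul_X_pow]
  rw [Finset.sum_eq_single (n - k), if_pos (by omega)]
  · intro j hj hjk
    rw [if_neg (by simp at hj; omega)]
  · simp

theorem natDegree_binaryForm_le (n : ℕ) (a : ℕ → A) : (binaryForm n a).natDegree ≤ n :=
  Polynomial.natDegree_sum_le_of_forall_le _ _ fun _ _ ↦
    (Polynomial.natDegree_C_mul_X_pow_le _ _).trans (Nat.sub_le _ _)

theorem coeff_taylor_binaryForm {n i : ℕ} (s : A) (a : ℕ → A) (hi : i ≤ n) :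
    (Polynomial.taylor s (binaryForm n a)).coeff (n - i) = taylorShift n s a i := by
  simp only [binaryForm, map_sum, Polynomial.taylor_mul, Polynomial.taylor_C,
    Polynomial.taylor_X_pow, Polynomial.finsetSum_coeff, Polynomial.coeff_C_mul,
    Polynomial.coeff_X_add_C_pow, taylorShift]
  symm
  apply Finset.sum_subset_zero_on_sdiff
  · intro j hj
    simp only [Finset.mem_range] at hj ⊢
    omega
  · intro j hj
    simp only [Finset.mem_sdiff, Finset.mem_range] at hj
    rw [Nat.choose_eq_zero_of_lt (by omega), Nat.cast_zero, mul_zero, mul_zero]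
  · intro j hj
    simp only [Finset.mem_range] at hj
    rw [show n - j - (n - i) = i - j by omega]
    ring

theorem binaryForm_taylorShift (n : ℕ) (s : A) (a : ℕ → A) :
    binaryForm n (taylorShift n s a) = Polynomial.taylor s (binaryForm n a) := by
  ext k
  rcases le_or_gt k n with hk | hk
  · rw [coeff_binaryForm _ hk, ← coeff_taylor_binaryForm s a (Nat.sub_le n k),
      Nat.sub_sub_self hk]
  · have hdeg {b : ℕ → A} : (binaryForm n b).natDegree < k :=
      (natDegree_binaryForm_le n b).trans_lt hk
    rw [Polynomial.coeff_eq_zero_of_natDegree_lt hdeg,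
      Polynomial.coeff_eq_zero_of_natDegree_lt (by rw [Polynomial.natDegree_taylor]; exact hdeg)]

theorem taylorShift_taylorShift {n i : ℕ} (r s : A) (a : ℕ → A) (hi : i ≤ n) :
    taylorShift n r (taylorShift n s a) i = taylorShift n (r + s) a i := by
  rw [← coeff_taylor_binaryForm _ _ hi, binaryForm_taylorShift, Polynomial.taylor_taylor,
    coeff_taylor_binaryForm _ _ hi]

theorem taylorShift_zero (n : ℕ) (a : ℕ → A) (i : ℕ) : taylorShift n 0 a i = a i := by
  rw [taylorShift, Finset.sum_eq_single i]
  · simp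
  · intro j hj hji
    rw [zero_pow (by simp at hj; omega), mul_zero]
  · simp

theorem taylorShift_taylorShift_neg {n i : ℕ} (s : A) (a : ℕ → A) (hi : i ≤ n) :
    taylorShift n s (taylorShift n (-s) a) i = a i := by
  rw [taylorShift_taylorShift _ _ _ hi, add_neg_cancel, taylorShift_zero]

theorem taylorShift_congr {n i : ℕ} (s : A) {a b : ℕ → A} (h : ∀ j ≤ i, a j = b j) :
    taylorShift n s a i = taylorShift n s b i :=
  Finset.sum_congr rfl fun j hj ↦ by rw [h j (Nat.lt_succ_iff.mp (Finset.mem_range.mp hj))]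

theorem map_taylorShift {B : Type*} [CommRing B] (f : A →+* B) (n : ℕ) (s : A) (a : ℕ → A)
    (i : ℕ) : f (taylorShift n s a i) = taylorShift n (f s) (f ∘ a) i := by
  simp [taylorShift, map_sum]

end TaylorShift

/-- `ℂ[α, β][β₀⁻¹]`, a ring containing the hatted elements on which the inverse substitution is
defined. -/
abbrev Loc : Type := Localization.Away (X 3 : MvPolynomial (Fin 7) ℂ)

noncomputable def coord (k : Fin 7) : Loc := algebraMap (MvPolynomial (Fin 7) ℂ) Loc (X k)

noncomputable def alphLoc : ℕ → Loc
  | 0 => coord 0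
  | 1 => coord 1
  | 2 => coord 2
  | _ => 0

noncomputable def betLoc : ℕ → Loc
  | 0 => coord 3
  | 1 => coord 4
  | 2 => coord 5
  | 3 => coord 6
  | _ => 0

noncomputable def shiftLoc : Loc :=
  (3⁻¹ : ℂ) • -(betLoc 1 * IsLocalization.Away.invSelf (X 3 : MvPolynomial (Fin 7) ℂ))

theorem algebraMap_loc_injective :
    Function.Injective (algebraMap (MvPolynomial (Fin 7) ℂ) Loc) :=
  IsLocalization.injective Loc (powers_le_nonZeroDivisors_of_noZeroDivisors (X_ne_zero 3))

theorem algebraicIndependent_coord : AlgebraicIndependent ℂ coord :=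
  (algebraicIndependent_X (Fin 7) ℂ).map' (f := IsScalarTower.toAlgHom ℂ _ Loc)
    algebraMap_loc_injective

theorem isUnit_betLoc_zero : IsUnit (betLoc 0) :=
  IsLocalization.Away.algebraMap_isUnit _

theorem three_mul_betLoc_zero_mul_shiftLoc : 3 * betLoc 0 * shiftLoc = -betLoc 1 := by
  have hinv : betLoc 0 * IsLocalization.Away.invSelf (X 3 : MvPolynomial (Fin 7) ℂ) = 1 :=
    IsLocalization.Away.mul_invSelf _
  have h3 : (3 : Loc) * algebraMap ℂ Loc 3⁻¹ = 1 := by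
    rw [← map_ofNat (algebraMap ℂ Loc), ← map_mul]
    norm_num
  rw [shiftLoc, Algebra.smul_def]
  linear_combination (-betLoc 1 * algebraMap ℂ Loc 3⁻¹ * 3) * hinv - betLoc 1 * h3

/-- `ĉ₀, ĉ₁, ĉ₂, d̂₀, β₁, d̂₂, d̂₃`, with `β₁` in place of `d̂₁ = 0`. -/
noncomputable def shiftedCoords : Fin 7 → Loc :=
  ![taylorShift 2 shiftLoc alphLoc 0, taylorShift 2 shiftLoc alphLoc 1,
    taylorShift 2 shiftLoc alphLoc 2, taylorShift 3 shiftLoc betLoc 0, coord 4,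
    taylorShift 3 shiftLoc betLoc 2, taylorShift 3 shiftLoc betLoc 3]

noncomputable def unshiftedBet : ℕ → Loc :=
  taylorShift 3 (-shiftLoc) (Function.update betLoc 1 0)

theorem unshiftedBet_zero : unshiftedBet 0 = betLoc 0 := by
  simp [unshiftedBet, taylorShift]

theorem unshiftedBet_one : unshiftedBet 1 = betLoc 1 := by
  rw [unshiftedBet, taylorShift, Finset.sum_range_succ, Finset.sum_range_one]
  norm_num
  linear_combination -three_mul_betLoc_zero_mul_shiftLoc

noncomputable def unshift : Loc →ₐ[ℂ] Loc :=
  IsLocalization.Away.liftAlgHom (X 3 : MvPolynomial (Fin 7) ℂ)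
    (f := aeval ![taylorShift 2 (-shiftLoc) alphLoc 0, taylorShift 2 (-shiftLoc) alphLoc 1,
      taylorShift 2 (-shiftLoc) alphLoc 2, unshiftedBet 0, unshiftedBet 1, unshiftedBet 2,
      unshiftedBet 3])
    (by simpa [unshiftedBet_zero] using isUnit_betLoc_zero)

theorem unshift_alphLoc {j : ℕ} (hj : j ≤ 2) :
    unshift (alphLoc j) = taylorShift 2 (-shiftLoc) alphLoc j := by
  interval_cases j <;> simp [unshift, alphLoc, coord]

theorem unshift_betLoc {j : ℕ} (hj : j ≤ 3) : unshift (betLoc j) = unshiftedBet j := by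
  interval_cases j <;> simp [unshift, betLoc, coord]

theorem unshift_shiftLoc : unshift shiftLoc = shiftLoc := by
  have h := congrArg unshift three_mul_betLoc_zero_mul_shiftLoc
  rw [map_mul, map_mul, map_neg, map_ofNat, unshift_betLoc (by norm_num),
    unshift_betLoc (by norm_num), unshiftedBet_zero, unshiftedBet_one,
    ← three_mul_betLoc_zero_mul_shiftLoc] at h
  have h3 : IsUnit (3 : Loc) := by
    rw [← map_ofNat (algebraMap ℂ Loc)]
    exact (isUnit_iff_ne_zero.mpr three_ne_zero).map _
  exact (h3.mul isUnit_betLoc_zero).mul_left_cancel h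

theorem unshift_coord_four : unshift (coord 4) = coord 4 := by
  rw [show coord 4 = betLoc 1 from rfl, unshift_betLoc (by norm_num), unshiftedBet_one]

theorem unshift_taylorShift_alphLoc {i : ℕ} (hi : i ≤ 2) :
    unshift (taylorShift 2 shiftLoc alphLoc i) = alphLoc i := by
  rw [← AlgHom.coe_toRingHom, map_taylorShift, AlgHom.coe_toRingHom, unshift_shiftLoc,
    taylorShift_congr (a := unshift ∘ alphLoc) _ fun j hj ↦ unshift_alphLoc (hj.trans hi),
    taylorShift_taylorShift_neg _ _ hi]

theorem unshift_taylorShift_betLoc {i : ℕ} (hi : i ≤ 3) :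
    unshift (taylorShift 3 shiftLoc betLoc i) = Function.update betLoc 1 0 i := by
  rw [← AlgHom.coe_toRingHom, map_taylorShift, AlgHom.coe_toRingHom, unshift_shiftLoc,
    taylorShift_congr (a := unshift ∘ betLoc) _ fun j hj ↦ unshift_betLoc (hj.trans hi),
    unshiftedBet, taylorShift_taylorShift_neg _ _ hi]

theorem unshift_comp_shiftedCoords : unshift ∘ shiftedCoords = coord := by
  funext k
  fin_cases k <;> simp [shiftedCoords, unshift_taylorShift_alphLoc, unshift_taylorShift_betLoc,
    unshift_coord_four, alphLoc, betLoc]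

theorem algebraicIndependent_shiftedCoords : AlgebraicIndependent ℂ shiftedCoords :=
  .of_comp unshift (unshift_comp_shiftedCoords ▸ algebraicIndependent_coord)

theorem bet_zero_ne_zero : bet 0 ≠ 0 :=
  IsFractionRing.to_map_eq_zero_iff.not.mpr (X_ne_zero 3)

noncomputable def toFrac : Loc →ₐ[ℂ] Frac :=
  IsLocalization.Away.liftAlgHom (X 3 : MvPolynomial (Fin 7) ℂ)
    (f := IsScalarTower.toAlgHom ℂ _ Frac) (isUnit_iff_ne_zero.mpr bet_zero_ne_zero)

theorem toFrac_injective : Function.Injective toFrac := by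
  change Function.Injective (toFrac : Loc →+* Frac)
  rw [IsLocalization.injective_iff_map_algebraMap_eq
    (Submonoid.powers (X 3 : MvPolynomial (Fin 7) ℂ))]
  intro p q
  simp [toFrac, algebraMap_loc_injective.eq_iff]

theorem toFrac_comp_alphLoc : toFrac ∘ alphLoc = alph := by
  funext j
  rcases j with _ | _ | _ | _ <;> simp [toFrac, alphLoc, alph, coord]

theorem toFrac_betLoc (j : ℕ) : toFrac (betLoc j) = bet j := by
  rcases j with _ | _ | _ | _ | _ <;> simp [toFrac, betLoc, bet, coord]

theorem toFrac_comp_betLoc : toFrac ∘ betLoc = bet :=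
  funext toFrac_betLoc

theorem toFrac_shiftLoc : toFrac shiftLoc = -bet 1 / (3 * bet 0) := by
  rw [eq_div_iff (mul_ne_zero three_ne_zero bet_zero_ne_zero), ← toFrac_betLoc, ← toFrac_betLoc,
    ← map_ofNat toFrac, ← map_mul, ← map_mul, mul_comm, three_mul_betLoc_zero_mul_shiftLoc,
    map_neg]

theorem toFrac_taylorShift_alphLoc (i : ℕ) :
    toFrac (taylorShift 2 shiftLoc alphLoc i) = chat i := by
  rw [show chat i = taylorShift 2 (-bet 1 / (3 * bet 0)) alph i from rfl, ← toFrac_shiftLoc,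
    ← toFrac_comp_alphLoc]
  exact map_taylorShift (toFrac : Loc →+* Frac) 2 shiftLoc alphLoc i

theorem toFrac_taylorShift_betLoc (i : ℕ) :
    toFrac (taylorShift 3 shiftLoc betLoc i) = dhat i := by
  rw [show dhat i = taylorShift 3 (-bet 1 / (3 * bet 0)) bet i from rfl, ← toFrac_shiftLoc,
    ← toFrac_comp_betLoc]
  exact map_taylorShift (toFrac : Loc →+* Frac) 3 shiftLoc betLoc i

/-- The six elements `ĉ0, ĉ1, ĉ2, d̂0, d̂2, d̂3` of `R` are algebraically independent
over ℂ. -/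
theorem stmt_12 :
    AlgebraicIndependent ℂ
      (![chat 0, chat 1, chat 2, dhat 0, dhat 2, dhat 3] : Fin 6 → Frac) := by
  have h := (algebraicIndependent_shiftedCoords.map' toFrac_injective).comp
    ![0, 1, 2, 3, 5, 6] (by decide)
  convert h using 1
  funext k
  fin_cases k <;> simp [shiftedCoords, toFrac_taylorShift_alphLoc, toFrac_taylorShift_betLoc]
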